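/- Under the twisted and cocycle conditions (and ∇ ∘ σ = σ), the weak crossed product multiplication μ_{A⊗V} = (μ_A ⊗ V) ∘ (μ_A ⊗ σ) ∘ (A ⊗ ψ ⊗ V) is normalized with respect to the idempotent ∇, that is, ∇ ∘ μ_{A⊗V} = μ_{A⊗V} = μ_{A⊗V} ∘ (∇ ⊗ ∇). -/

import Mathlib

open TensorProduct

variable {R A V : Type*} [CommRing R] [Ring A] [Algebra R A]
  [AddCommGroup V] [Module R V]

/-- (μ_A ⊗ V) ∘ (A ⊗ ψ) ∘ (ψ ⊗ A) : (V ⊗ A) ⊗ A → A ⊗ V -/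
noncomputable def psiMulLHS (ψ : V ⊗[R] A →ₗ[R] A ⊗[R] V) :
    (V ⊗[R] A) ⊗[R] A →ₗ[R] A ⊗[R] V :=
  TensorProduct.map (LinearMap.mul' R A) LinearMap.id
    ∘ₗ (TensorProduct.assoc R A A V).symm.toLinearMap
    ∘ₗ LinearMap.lTensor A ψ
    ∘ₗ (TensorProduct.assoc R A V A).toLinearMap
    ∘ₗ LinearMap.rTensor A ψ

/-- ψ ∘ (V ⊗ μ_A) : (V ⊗ A) ⊗ A → A ⊗ V -/
noncomputable def psiMulRHS (ψ : V ⊗[R] A →ₗ[R] A ⊗[R] V) :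
    (V ⊗[R] A) ⊗[R] A →ₗ[R] A ⊗[R] V :=
  ψ ∘ₗ LinearMap.lTensor V (LinearMap.mul' R A)
    ∘ₗ (TensorProduct.assoc R V A A).toLinearMap

/-- ∇ = (μ_A ⊗ V) ∘ (A ⊗ ψ) ∘ (A ⊗ V ⊗ η_A) : A ⊗ V → A ⊗ V -/
noncomputable def nabla (ψ : V ⊗[R] A →ₗ[R] A ⊗[R] V) :
    A ⊗[R] V →ₗ[R] A ⊗[R] V :=
  TensorProduct.map (LinearMap.mul' R A) LinearMap.id
    ∘ₗ (TensorProduct.assoc R A A V).symm.toLinearMap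
    ∘ₗ LinearMap.lTensor A ψ
    ∘ₗ LinearMap.lTensor A ((TensorProduct.mk R V A).flip 1)


/-- Twisted condition LHS: (μ_A ⊗ V) ∘ (A ⊗ ψ) ∘ (σ ⊗ A) : (V ⊗ V) ⊗ A → A ⊗ V. -/
noncomputable def twistedLHS (ψ : V ⊗[R] A →ₗ[R] A ⊗[R] V)
    (σ : V ⊗[R] V →ₗ[R] A ⊗[R] V) : (V ⊗[R] V) ⊗[R] A →ₗ[R] A ⊗[R] V :=
  TensorProduct.map (LinearMap.mul' R A) LinearMap.id
    ∘ₗ (TensorProduct.assoc R A A V).symm.toLinearMap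
    ∘ₗ LinearMap.lTensor A ψ
    ∘ₗ (TensorProduct.assoc R A V A).toLinearMap
    ∘ₗ LinearMap.rTensor A σ

/-- Twisted condition RHS: (μ_A ⊗ V) ∘ (A ⊗ σ) ∘ (ψ ⊗ V) ∘ (V ⊗ ψ) : V ⊗ (V ⊗ A) → A ⊗ V. -/
noncomputable def twistedRHS (ψ : V ⊗[R] A →ₗ[R] A ⊗[R] V)
    (σ : V ⊗[R] V →ₗ[R] A ⊗[R] V) : V ⊗[R] (V ⊗[R] A) →ₗ[R] A ⊗[R] V :=
  TensorProduct.map (LinearMap.mul' R A) LinearMap.id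
    ∘ₗ (TensorProduct.assoc R A A V).symm.toLinearMap
    ∘ₗ LinearMap.lTensor A σ
    ∘ₗ (TensorProduct.assoc R A V V).toLinearMap
    ∘ₗ LinearMap.rTensor V ψ
    ∘ₗ (TensorProduct.assoc R V A V).symm.toLinearMap
    ∘ₗ LinearMap.lTensor V ψ

/-- Cocycle condition LHS: (μ_A ⊗ V) ∘ (A ⊗ σ) ∘ (σ ⊗ V) : (V ⊗ V) ⊗ V → A ⊗ V. -/
noncomputable def cocycleLHS (σ : V ⊗[R] V →ₗ[R] A ⊗[R] V) :
    (V ⊗[R] V) ⊗[R] V →ₗ[R] A ⊗[R] V :=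
  TensorProduct.map (LinearMap.mul' R A) LinearMap.id
    ∘ₗ (TensorProduct.assoc R A A V).symm.toLinearMap
    ∘ₗ LinearMap.lTensor A σ
    ∘ₗ (TensorProduct.assoc R A V V).toLinearMap
    ∘ₗ LinearMap.rTensor V σ

/-- Cocycle condition RHS: (μ_A ⊗ V) ∘ (A ⊗ σ) ∘ (ψ ⊗ V) ∘ (V ⊗ σ) : V ⊗ (V ⊗ V) → A ⊗ V. -/
noncomputable def cocycleRHS (ψ : V ⊗[R] A →ₗ[R] A ⊗[R] V)
    (σ : V ⊗[R] V →ₗ[R] A ⊗[R] V) : V ⊗[R] (V ⊗[R] V) →ₗ[R] A ⊗[R] V :=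
  TensorProduct.map (LinearMap.mul' R A) LinearMap.id
    ∘ₗ (TensorProduct.assoc R A A V).symm.toLinearMap
    ∘ₗ LinearMap.lTensor A σ
    ∘ₗ (TensorProduct.assoc R A V V).toLinearMap
    ∘ₗ LinearMap.rTensor V ψ
    ∘ₗ (TensorProduct.assoc R V A V).symm.toLinearMap
    ∘ₗ LinearMap.lTensor V σ

/-- Auxiliary map V ⊗ (A ⊗ V) → A ⊗ V used in the weak crossed product. -/
noncomputable def wcpAux (ψ : V ⊗[R] A →ₗ[R] A ⊗[R] V)
    (σ : V ⊗[R] V →ₗ[R] A ⊗[R] V) : V ⊗[R] (A ⊗[R] V) →ₗ[R] A ⊗[R] V :=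
  TensorProduct.map (LinearMap.mul' R A) LinearMap.id
    ∘ₗ (TensorProduct.assoc R A A V).symm.toLinearMap
    ∘ₗ LinearMap.lTensor A σ
    ∘ₗ (TensorProduct.assoc R A V V).toLinearMap
    ∘ₗ LinearMap.rTensor V ψ
    ∘ₗ (TensorProduct.assoc R V A V).symm.toLinearMap

/-- The weak crossed product multiplication
μ_{A⊗V} = (μ_A ⊗ V) ∘ (μ_A ⊗ σ) ∘ (A ⊗ ψ ⊗ V) on A ⊗ V. -/
noncomputable def wcpMul (ψ : V ⊗[R] A →ₗ[R] A ⊗[R] V)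
    (σ : V ⊗[R] V →ₗ[R] A ⊗[R] V) :
    (A ⊗[R] V) ⊗[R] (A ⊗[R] V) →ₗ[R] A ⊗[R] V :=
  TensorProduct.map (LinearMap.mul' R A) LinearMap.id
    ∘ₗ (TensorProduct.assoc R A A V).symm.toLinearMap
    ∘ₗ LinearMap.lTensor A (wcpAux ψ σ)
    ∘ₗ (TensorProduct.assoc R A V (A ⊗[R] V)).toLinearMap

/-!
Write `ψ_b` and `σ_w` for the left `A`-linear extensions of `v ↦ ψ (v ⊗ b)` and `u ↦ σ (u ⊗ w)`.
Then `∇ = ψ_1` and `μ (x ⊗ (b ⊗ w)) = σ_w (ψ_b x)`. The condition on `ψ` says `ψ_b ∘ ψ_a = ψ_{ab}`,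
so `μ (x ⊗ b • y) = μ (ψ_b x ⊗ y)`, while the twisted condition evaluated at `1` together with
`∇ ∘ σ = σ` gives `μ (z ⊗ ψ (w ⊗ 1)) = σ_w z`. Since `∇ (b ⊗ w) = b • ψ (w ⊗ 1)`, these give
`μ ∘ (∇ ⊗ ∇) = μ`; and `∇ ∘ μ = μ` because `∇` is left `A`-linear and fixes the values of `σ`.
-/

section Extension

variable {M N : Type*} [AddCommGroup M] [Module R M] [AddCommGroup N] [Module R N]

/-- The left `A`-linear extension `a ⊗ m ↦ a • φ m` of `φ : M → A ⊗ N`. -/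
noncomputable def extendLeft (φ : M →ₗ[R] A ⊗[R] N) : A ⊗[R] M →ₗ[R] A ⊗[R] N :=
  TensorProduct.map (LinearMap.mul' R A) LinearMap.id
    ∘ₗ (TensorProduct.assoc R A A N).symm.toLinearMap
    ∘ₗ LinearMap.lTensor A φ

@[simp] lemma extendLeft_tmul (φ : M →ₗ[R] A ⊗[R] N) (a : A) (m : M) :
    extendLeft φ (a ⊗ₜ m) = a • φ m := by
  suffices h : ∀ t : A ⊗[R] N, TensorProduct.map (LinearMap.mul' R A) LinearMap.id
      ((TensorProduct.assoc R A A N).symm (a ⊗ₜ t)) = a • t from h (φ m)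
  intro t
  induction t using TensorProduct.induction_on with
  | zero => simp
  | tmul b n => simp [smul_tmul']
  | add x y hx hy => simp_all [tmul_add]

lemma extendLeft_smul (φ : M →ₗ[R] A ⊗[R] N) (a : A) (t : A ⊗[R] M) :
    extendLeft φ (a • t) = a • extendLeft φ t := by
  induction t using TensorProduct.induction_on with
  | zero => simp
  | tmul b m => simp [smul_tmul', mul_smul]
  | add x y hx hy => simp_all

lemma extendLeft_assoc_tmul {P : Type*} [AddCommGroup P] [Module R P]
    (φ : M ⊗[R] P →ₗ[R] A ⊗[R] N) (t : A ⊗[R] M) (p : P) :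
    extendLeft φ (TensorProduct.assoc R A M P (t ⊗ₜ p))
      = extendLeft (φ ∘ₗ (TensorProduct.mk R M P).flip p) t := by
  induction t using TensorProduct.induction_on with
  | zero => simp
  | tmul a m => simp
  | add x y hx hy => simp_all [add_tmul]

end Extension

section WeakCrossedProduct

variable (ψ : V ⊗[R] A →ₗ[R] A ⊗[R] V) (σ : V ⊗[R] V →ₗ[R] A ⊗[R] V)

noncomputable def psiAt (b : A) : A ⊗[R] V →ₗ[R] A ⊗[R] V :=
  extendLeft (ψ ∘ₗ (TensorProduct.mk R V A).flip b)

noncomputable def sigmaAt (w : V) : A ⊗[R] V →ₗ[R] A ⊗[R] V :=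
  extendLeft (σ ∘ₗ (TensorProduct.mk R V V).flip w)

@[simp] lemma psiAt_tmul (b c : A) (v : V) : psiAt ψ b (c ⊗ₜ v) = c • ψ (v ⊗ₜ b) := by
  simp [psiAt]

lemma psiAt_smul (b c : A) (t : A ⊗[R] V) : psiAt ψ b (c • t) = c • psiAt ψ b t :=
  extendLeft_smul _ c t

@[simp] lemma sigmaAt_tmul (w : V) (c : A) (u : V) :
    sigmaAt σ w (c ⊗ₜ u) = c • σ (u ⊗ₜ w) := by
  simp [sigmaAt]

lemma sigmaAt_smul (w : V) (c : A) (t : A ⊗[R] V) : sigmaAt σ w (c • t) = c • sigmaAt σ w t :=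
  extendLeft_smul _ c t

lemma nabla_eq_psiAt_one : nabla ψ = psiAt ψ 1 := by
  rw [psiAt, extendLeft, LinearMap.lTensor_comp]
  rfl

lemma psiMulLHS_tmul (x : V ⊗[R] A) (b : A) :
    psiMulLHS ψ (x ⊗ₜ b) = psiAt ψ b (ψ x) :=
  extendLeft_assoc_tmul ψ (ψ x) b

lemma twistedLHS_tmul (y : V ⊗[R] V) (b : A) :
    twistedLHS ψ σ (y ⊗ₜ b) = psiAt ψ b (σ y) :=
  extendLeft_assoc_tmul ψ (σ y) b

lemma twistedRHS_eq_wcpAux_comp : twistedRHS ψ σ = wcpAux ψ σ ∘ₗ LinearMap.lTensor V ψ := rfl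

lemma wcpAux_tmul_tmul (v : V) (b : A) (w : V) :
    wcpAux ψ σ (v ⊗ₜ (b ⊗ₜ w)) = sigmaAt σ w (ψ (v ⊗ₜ b)) :=
  extendLeft_assoc_tmul σ (ψ (v ⊗ₜ b)) w

lemma wcpMul_tmul (a : A) (v : V) (y : A ⊗[R] V) :
    wcpMul ψ σ ((a ⊗ₜ v) ⊗ₜ y) = a • wcpAux ψ σ (v ⊗ₜ y) :=
  extendLeft_tmul (wcpAux ψ σ) a (v ⊗ₜ y)

lemma wcpMul_tmul_tmul (x : A ⊗[R] V) (b : A) (w : V) :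
    wcpMul ψ σ (x ⊗ₜ (b ⊗ₜ w)) = sigmaAt σ w (psiAt ψ b x) := by
  induction x using TensorProduct.induction_on with
  | zero => simp
  | tmul a v => simp [wcpMul_tmul, wcpAux_tmul_tmul, sigmaAt_smul]
  | add x y hx hy => simp_all [add_tmul]

variable {ψ σ}

lemma psiAt_comp_psiAt (hψ : psiMulLHS ψ = psiMulRHS ψ) (a b : A) :
    psiAt ψ b ∘ₗ psiAt ψ a = psiAt ψ (a * b) := by
  refine TensorProduct.ext' fun c v ↦ ?_
  have h := LinearMap.congr_fun hψ ((v ⊗ₜ a) ⊗ₜ b)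
  rw [psiMulLHS_tmul] at h
  simp [psiAt_smul, h, psiMulRHS]

lemma wcpMul_tmul_smul (hψ : psiMulLHS ψ = psiMulRHS ψ) (x : A ⊗[R] V) (b : A)
    (y : A ⊗[R] V) :
    wcpMul ψ σ (x ⊗ₜ (b • y)) = wcpMul ψ σ (psiAt ψ b x ⊗ₜ y) := by
  induction y using TensorProduct.induction_on with
  | zero => simp
  | tmul c u =>
    rw [smul_tmul', smul_eq_mul, wcpMul_tmul_tmul, wcpMul_tmul_tmul,
      ← psiAt_comp_psiAt hψ, LinearMap.comp_apply]
  | add y y' hy hy' => simp_all [tmul_add]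

lemma wcpMul_tmul_psi_one
    (htw : twistedLHS ψ σ = twistedRHS ψ σ ∘ₗ (TensorProduct.assoc R V V A).toLinearMap)
    (hσ : nabla ψ ∘ₗ σ = σ) (z : A ⊗[R] V) (w : V) :
    wcpMul ψ σ (z ⊗ₜ ψ (w ⊗ₜ 1)) = sigmaAt σ w z := by
  induction z using TensorProduct.induction_on with
  | zero => simp
  | tmul c u =>
    have h := LinearMap.congr_fun htw ((u ⊗ₜ w) ⊗ₜ 1)
    rw [twistedLHS_tmul, ← nabla_eq_psiAt_one, ← LinearMap.comp_apply, hσ] at h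
    simp [wcpMul_tmul, h, twistedRHS_eq_wcpAux_comp]
  | add z z' hz hz' => simp_all [add_tmul]

lemma nabla_comp_sigmaAt (hσ : nabla ψ ∘ₗ σ = σ) (w : V) :
    nabla ψ ∘ₗ sigmaAt σ w = sigmaAt σ w := by
  refine TensorProduct.ext' fun c u ↦ ?_
  rw [LinearMap.comp_apply, sigmaAt_tmul, nabla_eq_psiAt_one, psiAt_smul,
    ← nabla_eq_psiAt_one, ← LinearMap.comp_apply, hσ]

end WeakCrossedProduct

theorem wcpMul_normalized_general (ψ : V ⊗[R] A →ₗ[R] A ⊗[R] V)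
    (σ : V ⊗[R] V →ₗ[R] A ⊗[R] V)
    (hψ : psiMulLHS ψ = psiMulRHS ψ)
    (htw : twistedLHS ψ σ =
      twistedRHS ψ σ ∘ₗ (TensorProduct.assoc R V V A).toLinearMap)
    (hσ : nabla ψ ∘ₗ σ = σ) :
    nabla ψ ∘ₗ wcpMul ψ σ = wcpMul ψ σ ∧
      wcpMul ψ σ ∘ₗ TensorProduct.map (nabla ψ) (nabla ψ) = wcpMul ψ σ := by
  constructor
  · refine TensorProduct.ext_fourfold' fun a v b w ↦ ?_
    rw [LinearMap.comp_apply, wcpMul_tmul_tmul, ← LinearMap.comp_apply,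
      nabla_comp_sigmaAt hσ]
  · refine TensorProduct.ext_fourfold' fun a v b w ↦ ?_
    set x : A ⊗[R] V := a ⊗ₜ v
    have hb : nabla ψ (b ⊗ₜ w) = b • ψ (w ⊗ₜ 1) := by simp [nabla_eq_psiAt_one]
    calc wcpMul ψ σ (nabla ψ x ⊗ₜ nabla ψ (b ⊗ₜ w))
        = wcpMul ψ σ (psiAt ψ b (psiAt ψ 1 x) ⊗ₜ ψ (w ⊗ₜ 1)) := by
          rw [hb, wcpMul_tmul_smul hψ, nabla_eq_psiAt_one]
      _ = sigmaAt σ w (psiAt ψ b x) := by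
          rw [wcpMul_tmul_psi_one htw hσ, ← LinearMap.comp_apply (psiAt ψ b),
            psiAt_comp_psiAt hψ, one_mul]
      _ = wcpMul ψ σ (x ⊗ₜ (b ⊗ₜ w)) := (wcpMul_tmul_tmul ψ σ x b w).symm

/-- Under the twisted and cocycle conditions (and ∇ ∘ σ = σ), the weak crossed
product multiplication is normalized with respect to ∇:
∇ ∘ μ_{A⊗V} = μ_{A⊗V} = μ_{A⊗V} ∘ (∇ ⊗ ∇). -/
theorem wcpMul_normalized (ψ : V ⊗[R] A →ₗ[R] A ⊗[R] V)
    (σ : V ⊗[R] V →ₗ[R] A ⊗[R] V)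
    (hψ : psiMulLHS ψ = psiMulRHS ψ)
    (htw : twistedLHS ψ σ =
      twistedRHS ψ σ ∘ₗ (TensorProduct.assoc R V V A).toLinearMap)
    (hco : cocycleLHS σ =
      cocycleRHS ψ σ ∘ₗ (TensorProduct.assoc R V V V).toLinearMap)
    (hσ : nabla ψ ∘ₗ σ = σ) :
    nabla ψ ∘ₗ wcpMul ψ σ = wcpMul ψ σ ∧
      wcpMul ψ σ ∘ₗ TensorProduct.map (nabla ψ) (nabla ψ) = wcpMul ψ σ :=
  wcpMul_normalized_general ψ σ hψ htw hσ
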